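/- For every n ≥ 1, Player O wins the delay game Γ_f(P_n) for the constant delay function f with f(0) = 2^n + 1, where P_n ⊆ (Σ_n × Σ_n)^ω contains a word (α, β) if and only if the suffix α(1)α(2)⋯ contains a bad β(0)-pair. -/

import Mathlib

universe u

namespace DelayGames

/-- A delay function maps each round to a positive number of letters. -/
def IsDelay (f : ℕ → ℕ) : Prop := ∀ i, 1 ≤ f i

/-- A delay function is constant if it is `1` from round `1` on. -/
def IsConstantDelay (f : ℕ → ℕ) : Prop := ∀ i, 0 < i → f i = 1

/-- `α` is the flattening (concatenation) of the sequence of finite blocks `u`: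
every finite concatenation of the first `i` blocks is the corresponding prefix of `α`. -/
def Flattens {σ : Type*} (u : ℕ → List σ) (α : ℕ → σ) : Prop :=
  ∀ i, (List.range i).flatMap u =
    (List.range ((List.range i).flatMap u).length).map α

/-- Player O wins the delay game with delay function `f` and winning condition `L`:
she has a strategy (mapping the input letters produced so far to an output letter)
such that every consistent play has its outcome in `L`. -/
def OWins {σI σO : Type*} (f : ℕ → ℕ) (L : Set (ℕ → σI × σO)) : Prop :=
  ∃ τO : List σI → σO,
    ∀ (u : ℕ → List σI) (v : ℕ → σO),
      (∀ i, (u i).length = f i) →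
      (∀ i, v i = τO ((List.range (i + 1)).flatMap u)) →
      ∀ α : ℕ → σI, Flattens u α → (fun n => (α n, v n)) ∈ L

/-- Player I wins the delay game with delay function `f` and winning condition `L`:
he has a strategy (mapping the output letters produced so far to a block of input
letters of the prescribed length) such that no consistent play has its outcome in `L`. -/
def IWins {σI σO : Type*} (f : ℕ → ℕ) (L : Set (ℕ → σI × σO)) : Prop :=
  ∃ τI : List σO → List σI,
    (∀ w, (τI w).length = f w.length) ∧
    ∀ (u : ℕ → List σI) (v : ℕ → σO),
      (∀ i, u i = τI ((List.range i).map v)) →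
      ∀ α : ℕ → σI, Flattens u α → (fun n => (α n, v n)) ∉ L

/-- A deterministic weak Muller automaton (state type `Q`, alphabet `σ`). -/
structure WDMA (Q σ : Type*) where
  init : Q
  step : Q → σ → Q
  acc : Set (Set Q)

/-- The unique run of a deterministic automaton on an infinite word. -/
def WDMA.run {Q σ : Type*} (A : WDMA Q σ) (α : ℕ → σ) : ℕ → Q
  | 0 => A.init
  | n + 1 => A.step (WDMA.run A α n) (α n)

/-- A wDMA accepts iff the occurrence set of the run is in the acceptance family. -/
def WDMA.language {Q σ : Type*} (A : WDMA Q σ) : Set (ℕ → σ) :=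
  {α | Set.range (A.run α) ∈ A.acc}

/-- A non-deterministic weak Muller automaton. -/
structure WNMA (Q σ : Type*) where
  init : Q
  trans : Set (Q × σ × Q)
  acc : Set (Set Q)

/-- A wNMA accepts iff some initial run processing the word has its occurrence set
in the acceptance family. -/
def WNMA.language {Q σ : Type*} (A : WNMA Q σ) : Set (ℕ → σ) :=
  {α | ∃ ρ : ℕ → Q, ρ 0 = A.init ∧
    (∀ n, (ρ n, α n, ρ (n + 1)) ∈ A.trans) ∧ Set.range ρ ∈ A.acc}

/-- Boolean formulas over variables in `Q` (Emerson-Lei conditions). -/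
inductive BForm (Q : Type u) : Type u where
  | var : Q → BForm Q
  | not : BForm Q → BForm Q
  | and : BForm Q → BForm Q → BForm Q
  | or : BForm Q → BForm Q → BForm Q

/-- Evaluation of a Boolean formula under a valuation. -/
def BForm.eval {Q : Type*} (v : Q → Prop) : BForm Q → Prop
  | .var q => v q
  | .not φ => ¬ BForm.eval v φ
  | .and φ ψ => BForm.eval v φ ∧ BForm.eval v ψ
  | .or φ ψ => BForm.eval v φ ∨ BForm.eval v ψ

/-- The length of a Boolean formula. -/
def BForm.size {Q : Type*} : BForm Q → ℕ
  | .var _ => 1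
  | .not φ => BForm.size φ + 1
  | .and φ ψ => BForm.size φ + BForm.size ψ + 1
  | .or φ ψ => BForm.size φ + BForm.size ψ + 1

/-- The family `𝓕_φ` of sets of states whose characteristic valuation satisfies `φ`. -/
def BForm.models {Q : Type*} (φ : BForm Q) : Set (Set Q) :=
  {F | BForm.eval (fun q => q ∈ F) φ}

/-- The set of states visited infinitely often by a run. -/
def InfOcc {Q : Type*} (ρ : ℕ → Q) : Set Q := {q | ∀ N, ∃ n, N ≤ n ∧ ρ n = q}

/-- A deterministic parity automaton. -/
structure DPA (Q σ : Type*) where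
  init : Q
  step : Q → σ → Q
  color : Q → ℕ

def DPA.run {Q σ : Type*} (A : DPA Q σ) (α : ℕ → σ) : ℕ → Q
  | 0 => A.init
  | n + 1 => A.step (DPA.run A α n) (α n)

/-- A DPA accepts iff the maximal color visited infinitely often by the run is even. -/
def DPA.language {Q σ : Type*} (A : DPA Q σ) : Set (ℕ → σ) :=
  {α | ∃ q ∈ InfOcc (A.run α), Even (A.color q) ∧
    ∀ q' ∈ InfOcc (A.run α), A.color q' ≤ A.color q}

/-- A non-deterministic parity automaton. -/
structure NPA (Q σ : Type*) where
  init : Q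
  trans : Set (Q × σ × Q)
  color : Q → ℕ

/-- An NPA accepts iff some initial run processing the word is such that the maximal
color it visits infinitely often is even. -/
def NPA.language {Q σ : Type*} (A : NPA Q σ) : Set (ℕ → σ) :=
  {α | ∃ ρ : ℕ → Q, ρ 0 = A.init ∧
    (∀ n, (ρ n, α n, ρ (n + 1)) ∈ A.trans) ∧
    ∃ q ∈ InfOcc ρ, Even (A.color q) ∧ ∀ q' ∈ InfOcc ρ, A.color q' ≤ A.color q}

/-- A finite word contains a bad `j`-pair. -/
def ListBadPair (w : List ℕ) (j : ℕ) : Prop :=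
  ∃ p p', p < p' ∧ p' < w.length ∧ w.getD p 0 = j ∧ w.getD p' 0 = j ∧
    ∀ q, p < q → q < p' → w.getD q 0 < j

/-- An infinite word contains a bad `j`-pair. -/
def InfBadPair (α : ℕ → ℕ) (j : ℕ) : Prop :=
  ∃ p p', p < p' ∧ α p = j ∧ α p' = j ∧ ∀ q, p < q → q < p' → α q < j

/-- The winning condition `P_n`: `(α, β)` belongs to it iff `α(1)α(2)⋯` contains a
bad `β(0)`-pair. -/
def P (n : ℕ) : Set (ℕ → Fin n × Fin n) :=
  {w | InfBadPair (fun k => ((w (k + 1)).1 : ℕ)) ((w 0).2 : ℕ)}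

/-- The `k`-th bit of the binary representation of `x`. -/
def bit (x k : ℕ) : ℕ := x / 2 ^ k % 2

/-! In a word over `{0, …, n}` without bad pairs the letter `n` occurs at most once, since two
consecutive occurrences of it form a bad `n`-pair; the parts before and after it are words over
`{0, …, n - 1}` without bad pairs. Hence such words over `Σ_n` have length `< 2 ^ n`, so the
letters `α(1) ⋯ α(2 ^ n)` that Player O sees in round `0` already contain a bad `j`-pair, and she
answers `j`. -/

theorem _root_.List.exists_eq_append_cons_notMem {α : Type*} {a : α} {l : List α} (h : a ∈ l) :
    ∃ s t, l = s ++ a :: t ∧ a ∉ s := by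
  induction l with
  | nil => simp at h
  | cons b l ih =>
    by_cases hb : b = a
    · exact ⟨[], l, by rw [hb]; rfl, List.not_mem_nil⟩
    · obtain ⟨s, t, rfl, hs⟩ := ih (by simpa [Ne.symm hb] using h)
      exact ⟨b :: s, t, rfl, by simp [Ne.symm hb, hs]⟩

theorem ListBadPair.of_infix {w₁ w₂ : List ℕ} {j : ℕ} (hb : ListBadPair w₁ j) (h : w₁ <:+: w₂) :
    ListBadPair w₂ j := by
  obtain ⟨s, t, rfl⟩ := h
  obtain ⟨p, p', hpp', hp'len, hp, hp', hbetween⟩ := hb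
  have hshift : ∀ q < w₁.length, (s ++ w₁ ++ t).getD (s.length + q) 0 = w₁.getD q 0 := by
    intro q hq
    rw [List.append_assoc, List.getD_append_right _ _ _ _ (by omega), Nat.add_sub_cancel_left,
      List.getD_append _ _ _ _ hq]
  refine ⟨s.length + p, s.length + p', by omega, by simp; omega, ?_, ?_, fun q hq hq' => ?_⟩
  · rw [hshift p (by omega), hp]
  · rw [hshift p' hp'len, hp']
  · obtain ⟨r, rfl⟩ := Nat.exists_eq_add_of_le (show s.length ≤ q by omega)
    rw [hshift r (by omega)]
    exact hbetween r (by omega) (by omega)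

theorem ListBadPair.mem {w : List ℕ} {j : ℕ} (hb : ListBadPair w j) : j ∈ w := by
  obtain ⟨p, p', _, hp'len, hp, -⟩ := hb
  rw [← hp, List.getD_eq_getElem _ _ (by omega)]
  exact List.getElem_mem _

theorem listBadPair_cons_append_singleton {l : List ℕ} {j : ℕ} (h : ∀ x ∈ l, x < j) :
    ListBadPair (j :: l ++ [j]) j := by
  refine ⟨0, l.length + 1, by omega, by simp, rfl, by simp, fun q hq hq' => ?_⟩
  obtain ⟨r, rfl⟩ := Nat.exists_eq_add_of_le' hq
  rw [List.cons_append, List.getD_cons_succ, List.getD_append _ _ _ _ (by omega),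
    List.getD_eq_getElem _ _ (by omega)]
  exact h _ (List.getElem_mem _)

theorem length_lt_two_pow_of_not_listBadPair {n : ℕ} {w : List ℕ} (hlt : ∀ x ∈ w, x < n)
    (hgood : ∀ j, ¬ ListBadPair w j) : w.length < 2 ^ n := by
  induction n generalizing w with
  | zero => simpa [List.eq_nil_iff_forall_not_mem] using hlt
  | succ n ih =>
    have hgood_of_infix : ∀ {w'}, w' <:+: w → ∀ j, ¬ ListBadPair w' j :=
      fun hw' j hb => hgood j (hb.of_infix hw')
    have hlt_of_notMem : ∀ {w'}, w' ⊆ w → n ∉ w' → ∀ x ∈ w', x < n := fun hsub hn x hx =>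
      lt_of_le_of_ne (Nat.lt_succ_iff.mp (hlt x (hsub hx))) (by rintro rfl; exact hn hx)
    by_cases hn : n ∈ w
    · obtain ⟨s, t, rfl, hns⟩ := List.exists_eq_append_cons_notMem hn
      have hnt : n ∉ t := by
        intro hnt
        obtain ⟨t₁, t₂, rfl, hnt₁⟩ := List.exists_eq_append_cons_notMem hnt
        refine hgood_of_infix ⟨s, t₂, by simp⟩ n (listBadPair_cons_append_singleton (l := t₁) ?_)
        exact hlt_of_notMem (fun x hx => by simp [hx]) hnt₁
      have hs := ih (hlt_of_notMem (fun x hx => by simp [hx]) hns)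
        (hgood_of_infix ⟨[], n :: t, by simp⟩)
      have ht := ih (hlt_of_notMem (fun x hx => by simp [hx]) hnt)
        (hgood_of_infix ⟨s ++ [n], [], by simp⟩)
      simp only [List.length_append, List.length_cons]
      omega
    · calc w.length < 2 ^ n := ih (hlt_of_notMem (fun _ hx => hx) hn) hgood
        _ < 2 ^ (n + 1) := Nat.pow_lt_pow_right (by norm_num) (by omega)

theorem exists_listBadPair_of_two_pow_le_length {n : ℕ} {w : List ℕ} (hlt : ∀ x ∈ w, x < n)
    (hlen : 2 ^ n ≤ w.length) : ∃ j < n, ListBadPair w j := by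
  by_contra! h
  refine (length_lt_two_pow_of_not_listBadPair hlt fun j hb => ?_).not_ge hlen
  exact h j (hlt j hb.mem) hb

theorem InfBadPair.of_listBadPair_map_range {β : ℕ → ℕ} {m j : ℕ}
    (hb : ListBadPair ((List.range m).map β) j) : InfBadPair β j := by
  obtain ⟨p, p', hpp', hp'len, hp, hp', hbetween⟩ := hb
  have hget : ∀ q < m, ((List.range m).map β).getD q 0 = β q := fun q hq => by
    simp [List.getD_eq_getElem?_getD, hq]
  simp only [List.length_map, List.length_range] at hp'len
  refine ⟨p, p', hpp', by rw [← hget p (by omega), hp], by rw [← hget p' hp'len, hp'],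
    fun q hq hq' => ?_⟩
  rw [← hget q (by omega)]
  exact hbetween q hq hq'

theorem Flattens.head_eq {σ : Type*} {u : ℕ → List σ} {α : ℕ → σ} (h : Flattens u α) :
    u 0 = (List.range (u 0).length).map α := by
  simpa using h 1

theorem oWins_of_head {σI σO : Type*} {f : ℕ → ℕ} {L : Set (ℕ → σI × σO)}
    (τ : List σI → σO)
    (hτ : ∀ (α : ℕ → σI) (v : ℕ → σO), v 0 = τ ((List.range (f 0)).map α) →
      (fun n => (α n, v n)) ∈ L) :
    OWins f L := by
  refine ⟨τ, fun u v hlen hv α hflat => hτ α v ?_⟩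
  rw [hv 0, ← hlen 0, ← hflat.head_eq]
  simp

noncomputable def badPairLetter {n : ℕ} (j₀ : Fin n) (l : List (Fin n)) : Fin n :=
  open Classical in
  if h : ∃ j : Fin n, ListBadPair (l.map Fin.val) j then h.choose else j₀

theorem listBadPair_badPairLetter {n : ℕ} (j₀ : Fin n) {l : List (Fin n)}
    (h : ∃ j : Fin n, ListBadPair (l.map Fin.val) j) :
    ListBadPair (l.map Fin.val) (badPairLetter j₀ l) := by
  rw [badPairLetter, dif_pos h]
  exact h.choose_spec

/-- Player O wins the delay game with winning condition `P n` for the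
constant delay function with `f 0 = 2 ^ n + 1`. -/
theorem OWins_P_with_exponential_lookahead :
    ∀ n : ℕ, 1 ≤ n →
      OWins (fun i => if i = 0 then 2 ^ n + 1 else 1) (P n) := by
  intro n hn
  refine oWins_of_head (fun l => badPairLetter ⟨0, hn⟩ (l.drop 1)) fun α v hv0 => ?_
  have hw : ((List.range (2 ^ n + 1)).map α).drop 1 =
      (List.range (2 ^ n)).map (α ∘ Nat.succ) := by
    simp [List.range_succ_eq_map]
  rw [if_pos rfl, hw] at hv0
  obtain ⟨j, hj, hb⟩ := exists_listBadPair_of_two_pow_le_length (n := n)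
    (w := ((List.range (2 ^ n)).map (α ∘ Nat.succ)).map Fin.val)
    (by simp only [List.mem_map]; rintro _ ⟨a, -, rfl⟩; exact a.isLt) (by simp)
  have hv := listBadPair_badPairLetter ⟨0, hn⟩ ⟨⟨j, hj⟩, hb⟩
  rw [← hv0, List.map_map] at hv
  exact InfBadPair.of_listBadPair_map_range hv

end DelayGames
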